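/- arXiv:2101.03404 — 2 statements merged into one kernel-verified Lean document; each statement's English description precedes it below -/
import Mathlib

section
/- Let G be a profinite group and let F = F(G). Then F(G/Φ(F)) = F/Φ(F), where Φ(F) is the Frattini subgroup of F. -/
open scoped commutatorElement

/-- Iterated left-normed commutator: `commIter g x n = [g, x, x, ..., x]` with `n` copies of `x`. -/
def commIter {G : Type*} [Group G] (g x : G) : ℕ → G
  | 0 => g
  | n + 1 => ⁅commIter g x n, x⁆

/-- `R` is a right Engel sink of `g`. -/
def IsRightEngelSink {G : Type*} [Group G] (g : G) (R : Set G) : Prop :=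
  ∀ x : G, ∃ n₀ : ℕ, 0 < n₀ ∧ ∀ n, n₀ ≤ n → commIter g x n ∈ R

/-- `E` is a left Engel sink of `g`. -/
def IsLeftEngelSink {G : Type*} [Group G] (g : G) (E : Set G) : Prop :=
  ∀ x : G, ∃ n₀ : ℕ, 0 < n₀ ∧ ∀ n, n₀ ≤ n → commIter x g n ∈ E

/-- A group is locally nilpotent if every finitely generated subgroup is nilpotent. -/
def IsLocallyNilpotent (G : Type*) [Group G] : Prop :=
  ∀ S : Finset G, Group.IsNilpotent ↥(Subgroup.closure (S : Set G))

/-- A topological group is pronilpotent if every quotient by an open normal subgroup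
is nilpotent. -/
def IsPronilpotent (G : Type*) [Group G] [TopologicalSpace G] : Prop :=
  ∀ (N : Subgroup G) (hN : N.Normal), IsOpen (N : Set G) →
    (haveI := hN; Group.IsNilpotent (G ⧸ N))

/-- All quotients of `G` by open normal subgroups have order coprime to `k`;
this is the coprimality condition for an automorphism of order `k` of `G`. -/
def QuotientsCoprimeTo (G : Type*) [Group G] [TopologicalSpace G] (k : ℕ) : Prop :=
  ∀ N : Subgroup G, N.Normal → IsOpen (N : Set G) → Nat.Coprime N.index k

/-- `F` is the largest closed normal pronilpotent subgroup of `G`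
(the pronilpotent radical `F(G)`). -/
def IsPronilpotentRadical (G : Type*) [Group G] [TopologicalSpace G] (F : Subgroup G) : Prop :=
  IsClosed (F : Set G) ∧ F.Normal ∧ IsPronilpotent ↥F ∧
    ∀ K : Subgroup G, IsClosed (K : Set G) → K.Normal → IsPronilpotent ↥K → K ≤ F

/-- `F2` is the second term of the pronilpotent series: the preimage in `G` of the
pronilpotent radical of `G ⧸ F`. -/
def IsSecondRadical (G : Type*) [Group G] [TopologicalSpace G] (F : Subgroup G) [F.Normal]
    (F2 : Subgroup G) : Prop :=
  ∃ Fq : Subgroup (G ⧸ F), IsPronilpotentRadical (G ⧸ F) Fq ∧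
    F2 = Fq.comap (QuotientGroup.mk' F)

/-- The Frattini subgroup of a topological group: the intersection of all maximal
open subgroups. -/
def frattiniOpen (G : Type*) [Group G] [TopologicalSpace G] : Subgroup G :=
  ⨅ (M : Subgroup G) (_ : IsOpen (M : Set G) ∧ IsCoatom M), M

/-- `γ_∞(G)`: the intersection of the closures of the lower central series. -/
def gammaInf (G : Type*) [Group G] [TopologicalSpace G] [IsTopologicalGroup G] : Subgroup G :=
  ⨅ n : ℕ, ((⊤ : Subgroup G).lowerCentralSeries n).topologicalClosure

/-- `g` is a `p`-element: the closed subgroup it topologically generates is pro-`p`. -/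
def IsPElement {G : Type*} [Group G] [TopologicalSpace G] [IsTopologicalGroup G]
    (p : ℕ) (g : G) : Prop :=
  ∀ M : Subgroup ↥((Subgroup.closure {g}).topologicalClosure),
    M.Normal → IsOpen (M : Set ↥((Subgroup.closure {g}).topologicalClosure)) →
      ∃ k : ℕ, M.index = p ^ k

/-- `K` is the Hall `p'`-subgroup of the pronilpotent group `F`: the largest closed
subgroup normal in `F` all of whose finite quotients have order coprime to `p`. -/
def IsHallPComplement (G : Type*) [Group G] [TopologicalSpace G] (p : ℕ)
    (F K : Subgroup G) : Prop :=
  K ≤ F ∧ IsClosed (K : Set G) ∧ (K.subgroupOf F).Normal ∧ QuotientsCoprimeTo ↥K p ∧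
    ∀ K' : Subgroup G, K' ≤ F → IsClosed (K' : Set G) → (K'.subgroupOf F).Normal →
      QuotientsCoprimeTo ↥K' p → K' ≤ K

/-! Conjugation by `G` acts on `F` by continuous automorphisms, which permute the maximal open
subgroups, so `Φ(F)` is normal in `G`. For the maximality, let `K ≥ Φ(F)` be closed and normal
with `K/Φ(F)` pronilpotent, and let `M` be an open normal subgroup of `G`. In the finite group
`G/M`, the image of `Φ(F)` lies in `Φ(FM/M)`, hence in `Φ(G/M)`, and `KM/M` is nilpotent modulo
this image. A normal subgroup that is nilpotent modulo a normal subgroup of the Frattini subgroup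
is nilpotent (Frattini argument), so every finite image of `K` is nilpotent, `K` is pronilpotent,
and `K ≤ F`. -/

open Subgroup
open QuotientGroup (mk' mk'_surjective)

section GroupTheory

variable {G : Type*} [Group G]

theorem MonoidHom.isNilpotent_range_iff {B : Type*} [Group B] (f : G →* B) :
    Group.IsNilpotent f.range ↔ Group.IsNilpotent (G ⧸ f.ker) :=
  ⟨fun _ => Group.nilpotent_of_mulEquiv (QuotientGroup.quotientKerEquivRange f).symm,
    fun _ => Group.nilpotent_of_mulEquiv (QuotientGroup.quotientKerEquivRange f)⟩

theorem Sylow.exists_map_subtype_eq_of_le {p : ℕ} {H K : Subgroup G} (hHK : H ≤ K)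
    (P : Sylow p K) (hP : (P : Subgroup K).map K.subtype ≤ H) :
    ∃ Q : Sylow p H, (Q : Subgroup H).map H.subtype = (P : Subgroup K).map K.subtype := by
  have hPrange : (P : Subgroup K) ≤ (inclusion hHK).range := fun x hx =>
    ⟨⟨x, hP ⟨x, hx, rfl⟩⟩, rfl⟩
  refine ⟨P.comapOfInjective _ (inclusion_injective hHK) hPrange, ?_⟩
  rw [Sylow.coe_comapOfInjective, ← subtype_comp_inclusion hHK, ← map_map, map_comap_eq,
    inf_of_le_right hPrange]

theorem map_subtype_frattini_le_frattini [Finite G] (H : Subgroup G) [H.Normal] :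
    (frattini H).map H.subtype ≤ frattini G := by
  refine le_iInf₂ fun M (hM : IsCoatom M) => ?_
  by_contra hle
  set Φ := (frattini H).map H.subtype
  have hΦM : Φ ⊔ M = ⊤ :=
    hM.2 _ (lt_of_le_of_ne le_sup_right fun h => hle (h ▸ le_sup_left))
  -- Dedekind's modular law, valid since `Φ` is normal and `Φ ≤ H`
  have hH : Φ ⊔ M ⊓ H = H := by
    rw [← SetLike.coe_set_eq, normal_mul, mul_inf_assoc _ _ _ (map_subtype_le _), ← normal_mul,
      hΦM, coe_top, Set.univ_inter]
  have hgen : M.subgroupOf H ⊔ frattini H = ⊤ := by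
    apply map_injective H.subtype_injective
    rw [Subgroup.map_sup, subgroupOf_map_subtype, sup_comm, hH, ← MonoidHom.range_eq_map,
      range_subtype]
  exact hle ((map_subtype_le _).trans (subgroupOf_eq_top.mp (frattini_nongenerating hgen)))

theorem isNilpotent_of_isNilpotent_map_of_le_frattini [Finite G] {K N : Subgroup G}
    [K.Normal] [N.Normal] (hN : N ≤ frattini G) (hNK : N ≤ K)
    [Group.IsNilpotent (K.map (mk' N))] : Group.IsNilpotent K := by
  refine ((Group.isNilpotent_of_finite_tfae (G := K)).out 0 3).mpr ?_
  intro p _ P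
  set P' := (P : Subgroup K).map K.subtype
  -- `P'N/N` is the unique Sylow `p`-subgroup of the nilpotent group `K/N`, so `P'N` is normal
  have hP'N : (P' ⊔ N).Normal := by
    set KN := K.map (mk' N)
    set S : Sylow p KN := P.mapSurjective ((mk' N).subgroupMap_surjective K)
    have : P' ⊔ N = ((S : Subgroup KN).map KN.subtype).comap (mk' N) := by
      have hcomp : KN.subtype.comp ((mk' N).subgroupMap K) = (mk' N).comp K.subtype := rfl
      rw [Sylow.coe_mapSurjective, Subgroup.map_map, hcomp, ← Subgroup.map_map, comap_map_eq,
        QuotientGroup.ker_mk']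
    rw [this]
    have : (S : Subgroup KN).Characteristic := S.characteristic_of_normal inferInstance
    have : KN.Normal := Normal.map inferInstance _ (mk'_surjective N)
    exact Normal.comap inferInstance _
  obtain ⟨Q, hQ⟩ :=
    Sylow.exists_map_subtype_eq_of_le (sup_le (map_subtype_le _) hNK) P le_sup_left
  have frattini_arg := Sylow.normalizer_sup_eq_top Q
  rw [hQ] at frattini_arg
  have : normalizer (P' : Set G) ⊔ frattini G = ⊤ := by
    refine top_le_iff.mp (frattini_arg.symm.le.trans (sup_le le_sup_left (sup_le ?_ ?_)))
    · exact le_normalizer.trans le_sup_left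
    · exact hN.trans le_sup_right
  exact (normalizer_eq_top_iff.mp (frattini_nongenerating this)).of_map_subtype

end GroupTheory

section TopologicalGroup

variable {G : Type*} [Group G] [TopologicalSpace G]

theorem frattiniOpen_le {M : Subgroup G} (hMo : IsOpen (M : Set G)) (hM : IsCoatom M) :
    frattiniOpen G ≤ M :=
  iInf₂_le M ⟨hMo, hM⟩

theorem map_frattiniOpen_le_frattiniOpen {B : Type*} [Group B] [TopologicalSpace B]
    {f : G →* B} (hc : Continuous f) (hs : Function.Surjective f) :
    (frattiniOpen G).map f ≤ frattiniOpen B :=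
  le_iInf₂ fun _ hM => map_le_iff_le_comap.mpr <|
    frattiniOpen_le (hM.1.preimage hc) (isCoatom_comap_of_surjective hs hM.2)

theorem map_frattiniOpen_le_frattini [IsTopologicalGroup G] {B : Type*} [Group B] {f : G →* B}
    (hs : Function.Surjective f) (hker : IsOpen (f.ker : Set G)) :
    (frattiniOpen G).map f ≤ frattini B :=
  le_iInf₂ fun M (hM : IsCoatom M) => map_le_iff_le_comap.mpr <|
    frattiniOpen_le (isOpen_mono (MonoidHom.ker_le_comap f M) hker)
      (isCoatom_comap_of_surjective hs hM)

instance normal_map_subtype_frattiniOpen [IsTopologicalGroup G] (F : Subgroup G) [F.Normal] :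
    ((frattiniOpen F).map F.subtype).Normal where
  conj_mem := by
    rintro _ ⟨m, hm, rfl⟩ g
    have hc : Continuous (MulAut.conjNormal (H := F) g).toMonoidHom := by
      apply continuous_induced_rng.mpr
      exact (continuous_const.mul continuous_subtype_val).mul continuous_const
    exact ⟨_,
      map_frattiniOpen_le_frattiniOpen hc (MulAut.conjNormal g).surjective ⟨m, hm, rfl⟩, rfl⟩

theorem isClosed_map_mk'_of_le {N F : Subgroup G} [N.Normal] (hF : IsClosed (F : Set G))
    (hNF : N ≤ F) : IsClosed (F.map (mk' N) : Set (G ⧸ N)) := by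
  rw [← (QuotientGroup.isQuotientMap_mk N).isClosed_preimage]
  convert hF
  change ((F.map (mk' N)).comap (mk' N) : Set G) = F
  rw [comap_map_eq, QuotientGroup.ker_mk', sup_eq_left.mpr hNF]

theorem IsPronilpotent.of_surjective {B : Type*} [Group B] [TopologicalSpace B]
    (hG : IsPronilpotent G) {f : G →* B} (hc : Continuous f) (hs : Function.Surjective f) :
    IsPronilpotent B := by
  intro N _ hN
  have := hG (N.comap f) inferInstance (hN.preimage hc)
  exact Group.nilpotent_of_surjective (QuotientGroup.map _ N f le_rfl)
    (QuotientGroup.map_surjective_of_surjective _ _ _ (QuotientGroup.mk_surjective.comp hs) _)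

theorem IsPronilpotent.isNilpotent_map {K : Subgroup G} (hK : IsPronilpotent K) {B : Type*}
    [Group B] (f : G →* B) (hf : IsOpen (f.ker : Set G)) : Group.IsNilpotent (K.map f) := by
  have := hK (f.comp K.subtype).ker inferInstance (hf.preimage continuous_subtype_val)
  rw [← range_subtype K, ← MonoidHom.range_comp]
  exact (MonoidHom.isNilpotent_range_iff _).mpr this

theorem isPronilpotent_of_forall_isNilpotent_map [IsTopologicalGroup G] [CompactSpace G]
    [TotallyDisconnectedSpace G] (K : Subgroup G)
    (h : ∀ (M : Subgroup G) [M.Normal], IsOpen (M : Set G) →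
      Group.IsNilpotent (K.map (mk' M))) :
    IsPronilpotent K := by
  intro N _ hN
  obtain ⟨U, hU, hUN⟩ := isOpen_induced_iff.mp hN
  have h1U : (1 : K) ∈ Subtype.val ⁻¹' U := hUN ▸ N.one_mem
  obtain ⟨M, hMU⟩ := ProfiniteGrp.exist_openNormalSubgroup_sub_open_nhds_of_one hU h1U
  set ψ := (mk' M.toSubgroup).comp K.subtype
  have hker : ψ.ker ≤ N := fun x hx => by
    change x ∈ (N : Set K)
    exact hUN ▸ hMU ((QuotientGroup.eq_one_iff _).mp hx)
  have : Group.IsNilpotent ψ.range := by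
    rw [MonoidHom.range_comp, range_subtype]
    exact h M.toSubgroup M.isOpen'
  have := (MonoidHom.isNilpotent_range_iff ψ).mp this
  exact Group.nilpotent_of_surjective (QuotientGroup.map _ _ (MonoidHom.id K) hker)
    (QuotientGroup.map_surjective_of_surjective _ _ _ QuotientGroup.mk_surjective _)

end TopologicalGroup

section FrattiniQuotient

variable {G : Type*} [Group G] [TopologicalSpace G] [IsTopologicalGroup G]

theorem map_frattiniOpen_map_subtype_le_frattini (F : Subgroup G) [F.Normal] {Q : Type*}
    [Group Q] [Finite Q] {f : G →* Q} (hs : Function.Surjective f)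
    (hker : IsOpen (f.ker : Set G)) :
    ((frattiniOpen F).map F.subtype).map f ≤ frattini Q := by
  have : (F.map f).Normal := Normal.map inferInstance f hs
  have hσ : IsOpen ((f.subgroupMap F).ker : Set F) := by
    rw [ker_subgroupMap]
    exact hker.preimage continuous_subtype_val
  calc ((frattiniOpen F).map F.subtype).map f
      = ((frattiniOpen F).map (f.subgroupMap F)).map (F.map f).subtype := by
        rw [Subgroup.map_map, Subgroup.map_map]; rfl
    _ ≤ (frattini (F.map f)).map (F.map f).subtype :=
        map_mono (map_frattiniOpen_le_frattini (f.subgroupMap_surjective F) hσ)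
    _ ≤ frattini Q := map_subtype_frattini_le_frattini _

theorem isPronilpotent_comap_mk'_map_subtype_frattiniOpen [CompactSpace G]
    [TotallyDisconnectedSpace G] (F : Subgroup G) [F.Normal]
    {K : Subgroup (G ⧸ (frattiniOpen F).map F.subtype)} [K.Normal] (hK : IsPronilpotent K) :
    IsPronilpotent (K.comap (mk' _)) := by
  set Φ := (frattiniOpen F).map F.subtype
  refine isPronilpotent_of_forall_isNilpotent_map _ fun M _ hM => ?_
  have : Finite (G ⧸ M) := M.quotient_finite_of_isOpen hM
  set π := mk' M
  set N := Φ.map π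
  have hN : N ≤ frattini (G ⧸ M) := map_frattiniOpen_map_subtype_le_frattini F
    (mk'_surjective M) (by rw [QuotientGroup.ker_mk']; exact hM)
  have hΦK : Φ ≤ K.comap (mk' Φ) := by simpa using MonoidHom.ker_le_comap (mk' Φ) K
  have : (K.comap (mk' Φ)).Normal := Normal.comap inferInstance _
  have : (K.comap (mk' Φ) |>.map π).Normal := Normal.map inferInstance _ (mk'_surjective M)
  let ρ := QuotientGroup.lift Φ ((mk' N).comp π) fun x hx =>
    (QuotientGroup.eq_one_iff _).mpr (mem_map_of_mem π hx)
  have hρ : IsOpen (ρ.ker : Set (G ⧸ Φ)) := by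
    refine isOpen_mono (H₁ := M.map (mk' Φ)) ?_ (QuotientGroup.isOpenMap_coe _ hM)
    rintro _ ⟨x, hx, rfl⟩
    change mk' N (π x) = 1
    rw [show π x = 1 from (QuotientGroup.eq_one_iff x).mpr hx, map_one]
  -- the image of `K` under `ρ`, whose kernel is open
  have : Group.IsNilpotent (((K.comap (mk' Φ)).map π).map (mk' N)) := by
    rw [Subgroup.map_map, ← QuotientGroup.lift_comp_mk' Φ ((mk' N).comp π),
      ← Subgroup.map_map, map_comap_eq_self_of_surjective (mk'_surjective Φ)]
    exact hK.isNilpotent_map ρ hρ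
  exact isNilpotent_of_isNilpotent_map_of_le_frattini hN (map_mono hΦK)

end FrattiniQuotient

theorem radical_mod_frattini_general
    (G : Type) [Group G] [TopologicalSpace G] [IsTopologicalGroup G]
    [CompactSpace G] [TotallyDisconnectedSpace G]
    (F : Subgroup G) (hF : IsPronilpotentRadical G F)
    (Φ : Subgroup G) (hΦ : Φ = (frattiniOpen ↥F).map F.subtype) :
    ∃ hn : Φ.Normal,
      haveI := hn
      IsPronilpotentRadical (G ⧸ Φ) (F.map (QuotientGroup.mk' Φ)) := by
  obtain ⟨hFc, hFn, hFpn, hFmax⟩ := hF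
  subst hΦ
  refine ⟨inferInstance, isClosed_map_mk'_of_le hFc (map_subtype_le _),
    hFn.map _ (mk'_surjective _), ?_, fun K hKc hKn hKpn => ?_⟩
  · exact hFpn.of_surjective (f := (mk' _).subgroupMap F)
      (continuous_induced_rng.mpr (QuotientGroup.continuous_mk.comp continuous_subtype_val))
      ((mk' _).subgroupMap_surjective F)
  · have hKF := hFmax _ (hKc.preimage QuotientGroup.continuous_mk) (hKn.comap _)
      (isPronilpotent_comap_mk'_map_subtype_frattiniOpen F hKpn)
    rw [← map_comap_eq_self_of_surjective (mk'_surjective _) K]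
    exact map_mono hKF

theorem radical_mod_frattini
    (G : Type) [Group G] [TopologicalSpace G] [IsTopologicalGroup G]
    [CompactSpace G] [T2Space G] [TotallyDisconnectedSpace G]
    (F : Subgroup G) (hF : IsPronilpotentRadical G F)
    (Φ : Subgroup G) (hΦ : Φ = (frattiniOpen ↥F).map F.subtype) :
    ∃ hn : Φ.Normal,
      haveI := hn
      IsPronilpotentRadical (G ⧸ Φ) (F.map (QuotientGroup.mk' Φ)) :=
  radical_mod_frattini_general G F hF Φ hΦ
end

section
/- If an element g of a group G has a finite right Engel sink, then g has a smallest right Engel sink R(g) (namely, the intersection of all right Engel sinks of g is a right Engel sink of g), and for every z ∈ R(g) there are integers n ≥ 1 and m ≥ 1 and an element x ∈ G such that z = [g, x, ..., x] with x repeated n times and also z = [g, x, ..., x] with x repeated n + m times. -/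
open scoped commutatorElement

/-!
For fixed `x`, the commutators `[g, x, …, x]` are the orbit of `g` under `y ↦ [y, x]`. An orbit that
eventually stays in a finite set is eventually periodic, so the elements `[g, x, …, x]` lying on a cycle
of this map form a right Engel sink; and every right Engel sink contains every such cycle element,
since the orbit returns to it at arbitrarily late times.
-/

open Function

namespace Function

variable {α : Type*} {f : α → α} {a : α} {S : Set α} {n₀ : ℕ}

theorem iterate_mem_of_mem_periodicPts {n : ℕ} (hper : f^[n] a ∈ periodicPts f)
    (hS : ∀ k, n₀ ≤ k → f^[k] a ∈ S) : f^[n] a ∈ S := by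
  obtain ⟨m, hm, hperm⟩ := hper
  have hreturn : f^[n₀ * m + n] a = f^[n] a := by
    rw [iterate_add_apply]
    exact hperm.const_mul n₀
  rw [← hreturn]
  exact hS _ (by nlinarith)

theorem eventually_iterate_mem_periodicPts (hfin : S.Finite) (hS : ∀ k, n₀ ≤ k → f^[k] a ∈ S) :
    ∃ N, ∀ k, N ≤ k → f^[k] a ∈ periodicPts f := by
  obtain ⟨i, j, hij, heq⟩ :=
    hfin.exists_lt_map_eq_of_forall_mem (f := fun k => f^[n₀ + k] a) fun k => hS _ le_self_add
  have hcycle : IsPeriodicPt f (j - i) (f^[n₀ + i] a) := by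
    change f^[n₀ + i] a = f^[n₀ + j] a at heq
    rw [IsPeriodicPt, IsFixedPt, ← iterate_add_apply, heq]
    congr 1
    omega
  refine ⟨n₀ + i, fun k hk => ?_⟩
  obtain ⟨l, rfl⟩ := Nat.exists_eq_add_of_le hk
  rw [add_comm, iterate_add_apply]
  exact mk_mem_periodicPts (by omega) (hcycle.apply_iterate l)

end Function

section RightEngelSink

variable {G : Type*} [Group G] {g : G} {R : Set G}

theorem commIter_eq_iterate (g x : G) (n : ℕ) : commIter g x n = (⁅·, x⁆)^[n] g := by
  induction n with
  | zero => rfl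
  | succ n ih => rw [iterate_succ_apply', ← ih, commIter]

def rightEngelCycle (g : G) : Set G :=
  {z | ∃ (n m : ℕ) (x : G), 1 ≤ n ∧ 1 ≤ m ∧ z = commIter g x n ∧ z = commIter g x (n + m)}

theorem isPeriodicPt_commIter_iff {x : G} {n m : ℕ} :
    IsPeriodicPt (⁅·, x⁆) m (commIter g x n) ↔ commIter g x n = commIter g x (n + m) := by
  rw [commIter_eq_iterate, commIter_eq_iterate, add_comm, iterate_add_apply, IsPeriodicPt,
    IsFixedPt, eq_comm]

theorem rightEngelCycle_subset (hR : IsRightEngelSink g R) : rightEngelCycle g ⊆ R := by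
  rintro z ⟨n, m, x, -, hm, rfl, hz⟩
  obtain ⟨n₀, -, hsink⟩ := hR x
  have hper := mk_mem_periodicPts hm (isPeriodicPt_commIter_iff.mpr hz)
  rw [commIter_eq_iterate] at hper ⊢
  exact iterate_mem_of_mem_periodicPts hper fun k hk => commIter_eq_iterate g x k ▸ hsink k hk

theorem isRightEngelSink_rightEngelCycle (hfin : R.Finite) (hR : IsRightEngelSink g R) :
    IsRightEngelSink g (rightEngelCycle g) := by
  intro x
  obtain ⟨n₀, -, hsink⟩ := hR x
  obtain ⟨N, hper⟩ := eventually_iterate_mem_periodicPts hfin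
    fun k hk => commIter_eq_iterate g x k ▸ hsink k hk
  refine ⟨N + 1, N.succ_pos, fun n hn => ?_⟩
  obtain ⟨m, hm, hcycle⟩ := hper n (by omega)
  rw [← commIter_eq_iterate] at hcycle
  exact ⟨n, m, x, by omega, hm, rfl, isPeriodicPt_commIter_iff.mp hcycle⟩

end RightEngelSink

theorem smallest_right_engel_sink
    (G : Type) [Group G] (g : G)
    (h : ∃ R : Set G, R.Finite ∧ IsRightEngelSink g R) :
    IsRightEngelSink g (⋂₀ {R : Set G | IsRightEngelSink g R}) ∧
      ∀ z ∈ ⋂₀ {R : Set G | IsRightEngelSink g R},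
        ∃ (n m : ℕ) (x : G), 1 ≤ n ∧ 1 ≤ m ∧
          z = commIter g x n ∧ z = commIter g x (n + m) := by
  obtain ⟨R, hfin, hR⟩ := h
  have hcycle := isRightEngelSink_rightEngelCycle hfin hR
  have hsmallest : ⋂₀ {R : Set G | IsRightEngelSink g R} = rightEngelCycle g :=
    (Set.sInter_subset_of_mem hcycle).antisymm
      (Set.subset_sInter fun _ hR' => rightEngelCycle_subset hR')
  rw [hsmallest]
  exact ⟨hcycle, fun _ hz => hz⟩
end
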